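/- Let γ : ℝ/ℤ → ℝ³ be an arclength parametrization of a closed Lipschitz curve Γ of length 1 with κ*(s) := 1/r(s), where r(s) is the security radius. Then there exists an absolute constant C (one may take C = 8) such that for every point x ∈ ℝ³ and every radius ρ > 0, the one-dimensional Lebesgue measure of { s ∈ ℝ/ℤ : |γ(s) − x| < ρ } is at most C ρ ‖κ*‖_{L^{1,∞}}, where ‖κ*‖_{L^{1,∞}} = sup_{σ>0} σ |{ s : κ*(s) ≥ σ }| is the weak-L¹ norm. -/

import Mathlib

open MeasureTheory
open scoped ENNReal NNReal

noncomputable section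

abbrev E3 := EuclideanSpace ℝ (Fin 3)

/-- Distance modulo `L·ℤ` of a real number from `0`. -/
def pdist (L a : ℝ) : ℝ := sInf {d : ℝ | ∃ k : ℤ, d = |a - L * k|}

/-- The security radius of a closed curve `γ` (with tangent `γd`) at parameter `s`. -/
def securityRadius (L : ℝ) (γ γd : ℝ → E3) (s : ℝ) : ℝ :=
  sSup {r : ℝ | 0 < r ∧
    (∀ h : ℝ, r ≤ pdist L h → r / 2 ≤ ‖γ (s + h) - γ s‖) ∧
    (∀ h : ℝ, pdist L h ≤ r → ‖γd (s + h) - γd s‖ ≤ pdist L h / r)}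

/-- `κ*(s) = 1/r(s)` as an extended nonnegative real (so `κ* = ∞` where `r = 0`). -/
def kstar (L : ℝ) (γ γd : ℝ → E3) (s : ℝ) : ℝ≥0∞ :=
  (ENNReal.ofReal (securityRadius L γ γd s))⁻¹

/-- The weak-`L¹` norm `‖κ*‖_{L^{1,∞}} = sup_{σ>0} σ |{s : κ*(s) ≥ σ}|` over one period. -/
def wkNorm (L : ℝ) (γ γd : ℝ → E3) : ℝ≥0∞ :=
  ⨆ σ : NNReal, (σ : ℝ≥0∞) * volume {s ∈ Set.Ico (0:ℝ) L | (σ : ℝ≥0∞) ≤ kstar L γ γd s}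

end

/-!
If some point `s₀` with `‖γ s₀ - x‖ < ρ` admits a secure radius `r > 8ρ`, then on the parameter
window of radius `r` around `s₀` the unit tangent stays within distance `1` of `γ' s₀`, so
`⟪γ' s₀, γ'⟫ ≥ 1/2` there and the curve moves at least half as fast as its parameter. Hence every
`s` with `‖γ s - x‖ < ρ` lies within `4ρ` of `s₀` modulo `1`, a set of measure at most `8ρ`. The
same estimate over a full period shows that a closed curve has no secure radius `≥ 1/2`, so
`κ* ≥ 2` a.e. and `‖κ*‖_{L^{1,∞}} ≥ 1`, which closes this case. Otherwise every admissible radius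
at such points is `≤ 8ρ`, i.e. `κ* ≥ 1/(8ρ)` on the set, and the definition of the weak norm
bounds its measure by `8ρ ‖κ*‖_{L^{1,∞}}`.
-/

open Set intervalIntegral
open scoped RealInnerProductSpace

lemma pdist_one_eq_norm (a : ℝ) : pdist 1 a = ‖(a : UnitAddCircle)‖ := by
  rw [UnitAddCircle.norm_eq]
  apply le_antisymm
  · exact csInf_le ⟨0, by rintro d ⟨k, rfl⟩; positivity⟩ ⟨round a, by simp⟩
  · exact le_csInf ⟨_, 0, rfl⟩ (by rintro d ⟨k, rfl⟩; simpa using round_le a k)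

lemma pdist_one_le_abs (a : ℝ) : pdist 1 a ≤ |a| := by
  simpa [pdist_one_eq_norm] using
    (QuotientAddGroup.norm_mk_le_norm (S := AddSubgroup.zmultiples (1 : ℝ)) (m := a))

lemma pdist_one_le_half (a : ℝ) : pdist 1 a ≤ 1 / 2 := by
  simpa [pdist_one_eq_norm] using
    AddCircle.norm_le_half_period (p := 1) (x := (a : UnitAddCircle)) one_ne_zero

lemma volume_setOf_pdist_sub_lt_le (s₀ c : ℝ) :
    volume {s ∈ Ico (0 : ℝ) 1 | pdist 1 (s - s₀) < c} ≤ ENNReal.ofReal (2 * c) := by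
  set B := Metric.ball (s₀ : UnitAddCircle) c
  have hB : {s ∈ Ico (0 : ℝ) 1 | pdist 1 (s - s₀) < c} ⊆ (↑) ⁻¹' B ∩ Ico 0 1 := by
    rintro s ⟨hs, hsc⟩
    refine ⟨?_, hs⟩
    rwa [mem_preimage, Metric.mem_ball, dist_eq_norm, ← AddCircle.coe_sub, ← pdist_one_eq_norm]
  calc _ ≤ volume.restrict (Ico (0 : ℝ) 1) ((↑) ⁻¹' B) := by
        rw [Measure.restrict_apply' measurableSet_Ico]; exact measure_mono hB
    _ = volume B := by
        rw [Measure.restrict_congr_set Ico_ae_eq_Ioc]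
        simpa using (UnitAddCircle.measurePreserving_mk 0).measure_preimage
          Metric.isOpen_ball.measurableSet.nullMeasurableSet
    _ ≤ volume (Metric.closedBall (s₀ : UnitAddCircle) c) :=
        measure_mono Metric.ball_subset_closedBall
    _ ≤ ENNReal.ofReal (2 * c) := by
        rw [AddCircle.volume_closedBall]; exact ENNReal.ofReal_le_ofReal (min_le_right _ _)

section TangentNearDirection

variable {F : Type*} [NormedAddCommGroup F] [InnerProductSpace ℝ F] {γ γd : ℝ → F} {K : ℝ≥0}

lemma ae_inner_eq_deriv_inner (hderiv : ∀ᵐ s, HasDerivAt γ (γd s) s) (v : F) :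
    (fun u ↦ ⟪v, γd u⟫) =ᵐ[volume] deriv fun u ↦ ⟪v, γ u⟫ := by
  filter_upwards [hderiv] with u hu
  simpa using ((hasDerivAt_const u v).inner ℝ hu).deriv.symm

lemma LipschitzWith.absolutelyContinuousOnInterval_inner (hlip : LipschitzWith K γ) (v : F)
    (a b : ℝ) : AbsolutelyContinuousOnInterval (fun u ↦ ⟪v, γ u⟫) a b :=
  ((innerSL ℝ v).lipschitz.comp hlip).lipschitzOnWith.absolutelyContinuousOnInterval

lemma LipschitzWith.integral_inner_deriv (hlip : LipschitzWith K γ)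
    (hderiv : ∀ᵐ s, HasDerivAt γ (γd s) s) (v : F) (a b : ℝ) :
    ∫ u in a..b, ⟪v, γd u⟫ = ⟪v, γ b - γ a⟫ := by
  rw [inner_sub_right, ← (hlip.absolutelyContinuousOnInterval_inner v a b).integral_deriv_eq_sub]
  exact integral_congr_ae ((ae_inner_eq_deriv_inner hderiv v).mono fun u hu _ ↦ hu)

lemma LipschitzWith.intervalIntegrable_inner_deriv (hlip : LipschitzWith K γ)
    (hderiv : ∀ᵐ s, HasDerivAt γ (γd s) s) (v : F) (a b : ℝ) :
    IntervalIntegrable (fun u ↦ ⟪v, γd u⟫) volume a b :=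
  (hlip.absolutelyContinuousOnInterval_inner v a b).intervalIntegrable_deriv.congr_ae
    (ae_restrict_of_ae (ae_inner_eq_deriv_inner hderiv v).symm)

lemma one_half_le_inner_of_norm_sub_le_one {v w : F} (hv : ‖v‖ = 1) (hw : ‖w‖ = 1)
    (hvw : ‖w - v‖ ≤ 1) : 1 / 2 ≤ ⟪v, w⟫ := by
  have := norm_sub_sq_real w v
  rw [hv, hw, real_inner_comm] at this
  nlinarith [norm_nonneg (w - v)]

lemma half_abs_sub_le_norm_sub (hlip : LipschitzWith K γ) (hderiv : ∀ᵐ s, HasDerivAt γ (γd s) s)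
    (hunit : ∀ᵐ s, ‖γd s‖ = 1) {v : F} (hv : ‖v‖ = 1) {a b : ℝ}
    (hclose : ∀ u ∈ uIcc a b, ‖γd u - v‖ ≤ 1) : |b - a| / 2 ≤ ‖γ b - γ a‖ := by
  wlog hab : a ≤ b generalizing a b
  · rw [abs_sub_comm, norm_sub_rev]
    exact this (by rwa [uIcc_comm]) (le_of_not_ge hab)
  calc |b - a| / 2 = ∫ _ in a..b, (1 / 2 : ℝ) := by
        rw [intervalIntegral.integral_const, abs_of_nonneg (sub_nonneg.2 hab), smul_eq_mul]; ring
    _ ≤ ∫ u in a..b, ⟪v, γd u⟫ := by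
        refine integral_mono_ae_restrict hab intervalIntegrable_const
          (hlip.intervalIntegrable_inner_deriv hderiv v a b) ?_
        filter_upwards [ae_restrict_of_ae hunit, ae_restrict_mem measurableSet_Icc] with u hu huI
        exact one_half_le_inner_of_norm_sub_le_one hv hu (hclose u (Icc_subset_uIcc huI))
    _ = ⟪v, γ b - γ a⟫ := hlip.integral_inner_deriv hderiv v a b
    _ ≤ ‖γ b - γ a‖ := by simpa [hv] using real_inner_le_norm v (γ b - γ a)

end TangentNearDirection

def IsSecureRadius (L : ℝ) (γ γd : ℝ → E3) (s r : ℝ) : Prop :=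
  0 < r ∧ (∀ h : ℝ, r ≤ pdist L h → r / 2 ≤ ‖γ (s + h) - γ s‖) ∧
    (∀ h : ℝ, pdist L h ≤ r → ‖γd (s + h) - γd s‖ ≤ pdist L h / r)

lemma securityRadius_le {L R s : ℝ} {γ γd : ℝ → E3} (hR : 0 ≤ R)
    (h : ∀ r, IsSecureRadius L γ γd s r → r ≤ R) : securityRadius L γ γd s ≤ R :=
  Real.sSup_le h hR

namespace IsSecureRadius

variable {γ γd : ℝ → E3} {s r : ℝ}

lemma norm_deriv_sub_le_one (hr : IsSecureRadius 1 γ γd s r) {u : ℝ} (hu : pdist 1 (u - s) ≤ r) :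
    ‖γd u - γd s‖ ≤ 1 := by
  have := hr.2.2 (u - s) hu
  rw [add_sub_cancel] at this
  exact this.trans ((div_le_one hr.1).2 hu)


lemma lt_half (hper : Function.Periodic γ 1) (hlip : LipschitzWith 1 γ)
    (hderiv : ∀ᵐ s, HasDerivAt γ (γd s) s) (hunit : ∀ᵐ s, ‖γd s‖ = 1) (hs : ‖γd s‖ = 1)
    (hr : IsSecureRadius 1 γ γd s r) : r < 1 / 2 := by
  by_contra! hr_half
  -- then `pdist ≤ 1/2 ≤ r` everywhere, so the tangent stays near `γd s` over a whole period
  have := half_abs_sub_le_norm_sub hlip hderiv hunit hs (a := s) (b := s + 1)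
    fun u _ ↦ hr.norm_deriv_sub_le_one ((pdist_one_le_half _).trans hr_half)
  rw [hper s, sub_self, norm_zero, add_sub_cancel_left, abs_one] at this
  norm_num at this

lemma pdist_le_two_mul_norm_sub (hper : Function.Periodic γ 1) (hlip : LipschitzWith 1 γ)
    (hderiv : ∀ᵐ s, HasDerivAt γ (γd s) s) (hunit : ∀ᵐ s, ‖γd s‖ = 1) (hs : ‖γd s‖ = 1)
    (hr : IsSecureRadius 1 γ γd s r) {t : ℝ} (ht : ‖γ t - γ s‖ < r / 2) :
    pdist 1 (t - s) ≤ 2 * ‖γ t - γ s‖ := by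
  have hlt : pdist 1 (t - s) < r := by
    by_contra! hge
    have := hr.2.1 _ hge
    rw [add_sub_cancel] at this
    linarith
  set h := t - s - round (t - s)
  have hpdist : pdist 1 (t - s) = |h| := by rw [pdist_one_eq_norm, UnitAddCircle.norm_eq]
  have hγ : γ (s + h) = γ t := by
    have := hper.int_mul (round (t - s)) (s + h)
    rwa [mul_one, show s + h + round (t - s) = t by ring, eq_comm] at this
  have := half_abs_sub_le_norm_sub hlip hderiv hunit hs (a := s) (b := s + h) fun u hu ↦
    hr.norm_deriv_sub_le_one <| (pdist_one_le_abs _).trans <|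
      (abs_sub_left_of_mem_uIcc hu).trans (by rw [add_sub_cancel_left, ← hpdist]; exact hlt.le)
  rw [add_sub_cancel_left, hγ, ← hpdist] at this
  linarith

end IsSecureRadius

section WeakNorm

variable {L : ℝ} {γ γd : ℝ → E3} {A : Set ℝ}

lemma mul_volume_le_wkNorm (σ : ℝ≥0) (hA : A ⊆ Ico 0 L)
    (hσ : ∀ᵐ s, s ∈ A → (σ : ℝ≥0∞) ≤ kstar L γ γd s) : σ * volume A ≤ wkNorm L γ γd :=
  calc (σ : ℝ≥0∞) * volume A
      ≤ σ * volume {s ∈ Ico (0 : ℝ) L | (σ : ℝ≥0∞) ≤ kstar L γ γd s} :=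
        mul_le_mul_right (measure_mono_ae (hσ.mono fun _ hs hsA ↦ ⟨hA hsA, hs hsA⟩)) _
    _ ≤ wkNorm L γ γd := le_iSup_of_le σ le_rfl

lemma volume_le_ofReal_mul_wkNorm {R : ℝ} (hR : 0 < R) (hA : A ⊆ Ico 0 L)
    (h : ∀ᵐ s, s ∈ A → securityRadius L γ γd s ≤ R) :
    volume A ≤ ENNReal.ofReal R * wkNorm L γ γd := by
  have hσ : ((R.toNNReal⁻¹ : ℝ≥0) : ℝ≥0∞) = (ENNReal.ofReal R)⁻¹ := by
    rw [ENNReal.coe_inv (by simpa using hR)]; rfl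
  have hwk := mul_volume_le_wkNorm R.toNNReal⁻¹ hA <| h.mono fun s hs hsA ↦
    hσ ▸ ENNReal.inv_le_inv.2 (ENNReal.ofReal_le_ofReal (hs hsA))
  rw [hσ] at hwk
  calc volume A = ENNReal.ofReal R * ((ENNReal.ofReal R)⁻¹ * volume A) := by
        rw [← mul_assoc, ENNReal.mul_inv_cancel (by simpa using hR) ENNReal.ofReal_ne_top,
          one_mul]
    _ ≤ ENNReal.ofReal R * wkNorm L γ γd := by gcongr

end WeakNorm

lemma one_le_wkNorm {γ γd : ℝ → E3} (hper : Function.Periodic γ 1) (hlip : LipschitzWith 1 γ)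
    (hderiv : ∀ᵐ s, HasDerivAt γ (γd s) s) (hunit : ∀ᵐ s, ‖γd s‖ = 1) : 1 ≤ wkNorm 1 γ γd := by
  have := volume_le_ofReal_mul_wkNorm one_pos subset_rfl <| hunit.mono fun s hs _ ↦
    securityRadius_le zero_le_one fun r hr ↦
      (hr.lt_half hper hlip hderiv hunit hs).le.trans (by norm_num)
  simpa using this

/-- for a unit-speed closed curve of length 1, the parameter-measure of points of
the curve within distance `ρ` of any `x ∈ ℝ³` is at most `8 ρ ‖κ*‖_{L^{1,∞}}`. -/
theorem stmt_3 (γ γd : ℝ → E3)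
    (hper : ∀ t, γ (t + 1) = γ t)
    (hlip : LipschitzWith 1 γ)
    (hderiv : ∀ᵐ s, HasDerivAt γ (γd s) s)
    (hunit : ∀ᵐ s, ‖γd s‖ = 1)
    (x : E3) (ρ : ℝ) (hρ : 0 < ρ) :
    volume {s ∈ Set.Ico (0:ℝ) 1 | ‖γ s - x‖ < ρ} ≤
      8 * ENNReal.ofReal ρ * wkNorm 1 γ γd := by
  set S := {s ∈ Ico (0 : ℝ) 1 | ‖γ s - x‖ < ρ}
  suffices volume S ≤ ENNReal.ofReal (8 * ρ) * wkNorm 1 γ γd by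
    rwa [ENNReal.ofReal_mul (by norm_num), ENNReal.ofReal_ofNat] at this
  by_cases hlarge : ∃ s₀ ∈ S, ‖γd s₀‖ = 1 ∧ ∃ r, IsSecureRadius 1 γ γd s₀ r ∧ 8 * ρ < r
  · obtain ⟨s₀, hs₀, hunit₀, r, hr, hρr⟩ := hlarge
    have hS : S ⊆ {s ∈ Ico (0 : ℝ) 1 | pdist 1 (s - s₀) < 4 * ρ} := by
      rintro s ⟨hs, hsx⟩
      have hclose : ‖γ s - γ s₀‖ < 2 * ρ := by
        linarith [norm_sub_le_norm_sub_add_norm_sub (γ s) x (γ s₀), norm_sub_rev x (γ s₀), hs₀.2]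
      have := hr.pdist_le_two_mul_norm_sub hper hlip hderiv hunit hunit₀ (t := s) (by linarith)
      exact ⟨hs, by linarith⟩
    calc volume S ≤ ENNReal.ofReal (2 * (4 * ρ)) :=
          (measure_mono hS).trans (volume_setOf_pdist_sub_lt_le s₀ _)
      _ = ENNReal.ofReal (8 * ρ) := by ring_nf
      _ ≤ ENNReal.ofReal (8 * ρ) * wkNorm 1 γ γd :=
          le_mul_of_one_le_right' (one_le_wkNorm hper hlip hderiv hunit)
  · push Not at hlarge
    refine volume_le_ofReal_mul_wkNorm (by positivity) (sep_subset _ _) ?_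
    filter_upwards [hunit] with s hs hsS
    exact securityRadius_le (by positivity) fun r hr ↦ hlarge s hsS hs r hr
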